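/- arXiv:1212.6206 — 7 statements merged into one kernel-verified Lean document; each statement's English description precedes it below -/
import Mathlib

section
/- Let a > b > 0, let r, θ : ℝ → ℝ be twice continuously differentiable functions satisfying the torus geodesic equations, and let γ(λ) = Φ(r(λ), θ(λ)) be the corresponding curve in ℝ³. Then for every λ ∈ ℝ the third (z-) component of the cross product γ(λ) × γ'(λ) equals (a + b·cos(r(λ)/b))²·θ'(λ), and this quantity is constant in λ, equal to the angular momentum ℓ = (a + b·cos(r(0)/b))²·θ'(0). -/
/-!
Writing `R = a + b cos (r / b)`, the curve projects to the plane curve `R·(cos θ, sin θ)`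
in polar form, and the `z`-component of `γ × γ'` is the planar cross product
`R² θ'`. The second geodesic equation reads `R θ'' + 2 R' θ' = 0` once multiplied by
`R > 0`, and this is exactly `(R² θ')' = R (R θ'' + 2 R' θ') = 0`.
-/

open Real

lemma polar_cross_deriv {ρ θ : ℝ → ℝ} {t : ℝ} (hρ : DifferentiableAt ℝ ρ t)
    (hθ : DifferentiableAt ℝ θ t) :
    ρ t * cos (θ t) * deriv (fun s => ρ s * sin (θ s)) t -
        ρ t * sin (θ t) * deriv (fun s => ρ s * cos (θ s)) t =
      ρ t ^ 2 * deriv θ t := by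
  have hsin : HasDerivAt (fun s => ρ s * sin (θ s))
      (deriv ρ t * sin (θ t) + ρ t * (cos (θ t) * deriv θ t)) t :=
    hρ.hasDerivAt.mul hθ.hasDerivAt.sin
  have hcos : HasDerivAt (fun s => ρ s * cos (θ s))
      (deriv ρ t * cos (θ t) + ρ t * (-sin (θ t) * deriv θ t)) t :=
    hρ.hasDerivAt.mul hθ.hasDerivAt.cos
  rw [hsin.deriv, hcos.deriv]
  linear_combination ρ t ^ 2 * deriv θ t * sin_sq_add_cos_sq (θ t)

lemma sq_mul_eq_of_mul_deriv_add_two_deriv_mul_eq_zero {ρ ω : ℝ → ℝ}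
    (hρ : Differentiable ℝ ρ) (hω : Differentiable ℝ ω)
    (h : ∀ t, ρ t * deriv ω t + 2 * deriv ρ t * ω t = 0) (x y : ℝ) :
    ρ x ^ 2 * ω x = ρ y ^ 2 * ω y := by
  have hderiv : ∀ t, HasDerivAt (fun s => ρ s ^ 2 * ω s) 0 t := fun t => by
    refine (((hρ t).hasDerivAt.fun_pow 2).mul (hω t).hasDerivAt).congr_deriv ?_
    linear_combination ρ t * h t
  exact is_const_of_deriv_eq_zero (fun t => (hderiv t).differentiableAt)
    (fun t => (hderiv t).deriv) x y

lemma add_mul_cos_pos {a b : ℝ} (hb : 0 ≤ b) (hab : b < a) (x : ℝ) : 0 < a + b * cos x := by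
  nlinarith [neg_one_le_cos x]

lemma hasDerivAt_add_mul_cos_comp_div {a b r' t : ℝ} {r : ℝ → ℝ} (hb : b ≠ 0)
    (hr : HasDerivAt r r' t) :
    HasDerivAt (fun s => a + b * cos (r s / b)) (-sin (r t / b) * r') t := by
  refine (((hr.div_const b).cos.const_mul b).const_add a).congr_deriv ?_
  field_simp

/-- The z-component of γ × γ' for the torus curve γ = Φ(r,θ) equals `R(r)² θ'`,
and this angular momentum is conserved along geodesics. -/
theorem torus_geodesic_angular_momentum
    (a b : ℝ) (hb : 0 < b) (hab : b < a)
    (r θ : ℝ → ℝ) (hr : ContDiff ℝ 2 r) (hθ : ContDiff ℝ 2 θ)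
    (hgeo : ∀ t : ℝ,
      deriv (deriv r) t =
        -Real.sin (r t / b) * (a + b * Real.cos (r t / b)) * (deriv θ t) ^ 2 ∧
      deriv (deriv θ) t =
        (2 * Real.sin (r t / b) / (a + b * Real.cos (r t / b))) * deriv r t * deriv θ t) :
    ∀ t : ℝ,
      ((a + b * Real.cos (r t / b)) * Real.cos (θ t)) *
          deriv (fun s => (a + b * Real.cos (r s / b)) * Real.sin (θ s)) t -
        ((a + b * Real.cos (r t / b)) * Real.sin (θ t)) *
          deriv (fun s => (a + b * Real.cos (r s / b)) * Real.cos (θ s)) t =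
        (a + b * Real.cos (r t / b)) ^ 2 * deriv θ t ∧
      (a + b * Real.cos (r t / b)) ^ 2 * deriv θ t =
        (a + b * Real.cos (r 0 / b)) ^ 2 * deriv θ 0 := by
  have hrd : Differentiable ℝ r := hr.differentiable (by norm_num)
  have hθd : Differentiable ℝ θ := hθ.differentiable (by norm_num)
  have hθd' : Differentiable ℝ (deriv θ) :=
    (hθ.iterate_deriv' 1 1).differentiable (by norm_num)
  have hR : ∀ t, HasDerivAt (fun s => a + b * cos (r s / b)) (-sin (r t / b) * deriv r t) t :=
    fun t => hasDerivAt_add_mul_cos_comp_div hb.ne' (hrd t).hasDerivAt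
  have hθ_geodesic : ∀ t, (a + b * cos (r t / b)) * deriv (deriv θ) t +
      2 * deriv (fun s => a + b * cos (r s / b)) t * deriv θ t = 0 := fun t => by
    have hR_pos := add_mul_cos_pos hb.le hab (r t / b)
    rw [(hgeo t).2, (hR t).deriv]
    field_simp
    ring
  intro t
  exact ⟨polar_cross_deriv (ρ := fun s => a + b * cos (r s / b))
      (hR t).differentiableAt (hθd t),
    sq_mul_eq_of_mul_deriv_add_two_deriv_mul_eq_zero (ρ := fun s => a + b * cos (r s / b))
      (fun s => (hR s).differentiableAt) hθd' hθ_geodesic t 0⟩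
end

section
/- Let a > b > 0 and let r, θ : ℝ → ℝ be twice continuously differentiable functions satisfying the torus geodesic equations, with angular momentum ℓ and speed v > 0. Then for every λ ∈ ℝ, the azimuthal radius satisfies a + b·cos(r(λ)/b) ≥ |ℓ|/v; that is, the geodesic never comes closer to the symmetry axis than the distance |ℓ|/v. -/
/-!
The torus is the surface of revolution with metric `dr² + R(r)² dθ²`. Along a geodesic of such a
surface the angular momentum `R² θ'` (Clairaut's relation) and the squared speed
`r'² + R² θ'²` are conserved. At every time `R |θ'| ≤ v`, hence `|ℓ| = R · R |θ'| ≤ R v`.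
-/

open Real

noncomputable section

namespace SurfaceOfRevolution

/-- The geodesic equations of the metric `dr² + R(r)² dθ²`. -/
def IsGeodesic (R r θ : ℝ → ℝ) : Prop :=
  ∀ t, deriv (deriv r) t = R (r t) * deriv R (r t) * deriv θ t ^ 2 ∧
    deriv (deriv θ) t = -(2 * deriv R (r t) / R (r t)) * deriv r t * deriv θ t

def angularMomentum (R r θ : ℝ → ℝ) (t : ℝ) : ℝ :=
  R (r t) ^ 2 * deriv θ t

def speedSq (R r θ : ℝ → ℝ) (t : ℝ) : ℝ :=
  deriv r t ^ 2 + R (r t) ^ 2 * deriv θ t ^ 2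

variable {R r θ : ℝ → ℝ}

/-- Thanks to `x / 0 = 0` this holds also where `R (r t) = 0`. -/
lemma IsGeodesic.sq_mul_deriv_deriv (hgeo : IsGeodesic R r θ) (t : ℝ) :
    R (r t) ^ 2 * deriv (deriv θ) t = -(2 * R (r t) * deriv R (r t) * deriv r t * deriv θ t) := by
  rw [(hgeo t).2]
  rcases eq_or_ne (R (r t)) 0 with h | h
  · simp [h]
  · field_simp

lemma IsGeodesic.hasDerivAt_angularMomentum (hgeo : IsGeodesic R r θ)
    (hR : Differentiable ℝ R) (hr : Differentiable ℝ r) (hθ' : Differentiable ℝ (deriv θ))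
    (t : ℝ) : HasDerivAt (angularMomentum R r θ) 0 t := by
  have hRr := (hR (r t)).hasDerivAt.comp t (hr t).hasDerivAt
  refine ((hRr.pow 2).mul (hθ' t).hasDerivAt).congr_deriv ?_
  simp only [Pi.pow_apply, Function.comp_apply]
  linear_combination hgeo.sq_mul_deriv_deriv t

lemma IsGeodesic.hasDerivAt_speedSq (hgeo : IsGeodesic R r θ)
    (hR : Differentiable ℝ R) (hr : Differentiable ℝ r) (hr' : Differentiable ℝ (deriv r))
    (hθ' : Differentiable ℝ (deriv θ)) (t : ℝ) : HasDerivAt (speedSq R r θ) 0 t := by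
  have hRr := (hR (r t)).hasDerivAt.comp t (hr t).hasDerivAt
  refine (((hr' t).hasDerivAt.pow 2).add
    ((hRr.pow 2).mul ((hθ' t).hasDerivAt.pow 2))).congr_deriv ?_
  simp only [Pi.pow_apply, Function.comp_apply, (hgeo t).1]
  linear_combination (2 * deriv θ t) * hgeo.sq_mul_deriv_deriv t

lemma IsGeodesic.angularMomentum_eq (hgeo : IsGeodesic R r θ)
    (hR : Differentiable ℝ R) (hr : Differentiable ℝ r) (hθ' : Differentiable ℝ (deriv θ))
    (s t : ℝ) : angularMomentum R r θ s = angularMomentum R r θ t :=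
  is_const_of_deriv_eq_zero
    (fun u => (hgeo.hasDerivAt_angularMomentum hR hr hθ' u).differentiableAt)
    (fun u => (hgeo.hasDerivAt_angularMomentum hR hr hθ' u).deriv) s t

lemma IsGeodesic.speedSq_eq (hgeo : IsGeodesic R r θ)
    (hR : Differentiable ℝ R) (hr : Differentiable ℝ r) (hr' : Differentiable ℝ (deriv r))
    (hθ' : Differentiable ℝ (deriv θ)) (s t : ℝ) : speedSq R r θ s = speedSq R r θ t :=
  is_const_of_deriv_eq_zero
    (fun u => (hgeo.hasDerivAt_speedSq hR hr hr' hθ' u).differentiableAt)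
    (fun u => (hgeo.hasDerivAt_speedSq hR hr hr' hθ' u).deriv) s t

lemma abs_angularMomentum_le {t : ℝ} (hR : 0 ≤ R (r t)) :
    |angularMomentum R r θ t| ≤ R (r t) * √(speedSq R r θ t) := calc
  |angularMomentum R r θ t| = R (r t) * √((R (r t) * deriv θ t) ^ 2) := by
    rw [sqrt_sq_eq_abs, angularMomentum, abs_mul, abs_mul, abs_of_nonneg (sq_nonneg _),
      abs_of_nonneg hR, sq, mul_assoc]
  _ ≤ R (r t) * √(speedSq R r θ t) := by
    gcongr
    rw [speedSq, mul_pow]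
    exact le_add_of_nonneg_left (sq_nonneg _)

end SurfaceOfRevolution

end

open SurfaceOfRevolution

lemma torus_isGeodesic {a b : ℝ} (hb : b ≠ 0) {r θ : ℝ → ℝ}
    (hgeo : ∀ t : ℝ,
      deriv (deriv r) t =
        -Real.sin (r t / b) * (a + b * Real.cos (r t / b)) * (deriv θ t) ^ 2 ∧
      deriv (deriv θ) t =
        (2 * Real.sin (r t / b) / (a + b * Real.cos (r t / b))) * deriv r t * deriv θ t) :
    IsGeodesic (fun ρ => a + b * cos (ρ / b)) r θ := by
  have hR : ∀ ρ, deriv (fun ρ => a + b * cos (ρ / b)) ρ = -sin (ρ / b) := fun ρ => by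
    have h := (((hasDerivAt_id' ρ).div_const b).cos.const_mul b).const_add a
    rw [h.deriv]
    field_simp
  intro t
  simp only [hR]
  constructor
  · rw [(hgeo t).1]; ring
  · rw [(hgeo t).2]; ring

theorem torus_geodesic_min_radius_general
    (a b : ℝ) (hb : 0 < b) (hab : b < a)
    (r θ : ℝ → ℝ) (hr : ContDiff ℝ 2 r) (hθ : ContDiff ℝ 2 θ)
    (hgeo : ∀ t : ℝ,
      deriv (deriv r) t =
        -Real.sin (r t / b) * (a + b * Real.cos (r t / b)) * (deriv θ t) ^ 2 ∧
      deriv (deriv θ) t =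
        (2 * Real.sin (r t / b) / (a + b * Real.cos (r t / b))) * deriv r t * deriv θ t)
    (ℓ v : ℝ)
    (hℓ : ℓ = (a + b * Real.cos (r 0 / b)) ^ 2 * deriv θ 0)
    (hv : v = Real.sqrt ((deriv r 0) ^ 2 +
      (a + b * Real.cos (r 0 / b)) ^ 2 * (deriv θ 0) ^ 2)) :
    ∀ t : ℝ, |ℓ| / v ≤ a + b * Real.cos (r t / b) := by
  intro t
  set R : ℝ → ℝ := fun ρ => a + b * cos (ρ / b)
  have hgeo' : IsGeodesic R r θ := torus_isGeodesic hb.ne' hgeo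
  have hRd : Differentiable ℝ R := by fun_prop
  have hrd : Differentiable ℝ r := hr.differentiable two_ne_zero
  have hℓt : ℓ = angularMomentum R r θ t :=
    hℓ.trans (hgeo'.angularMomentum_eq hRd hrd hθ.differentiable_deriv_two 0 t)
  have hvt : v = √(speedSq R r θ t) := hv.trans <| congrArg sqrt <|
    hgeo'.speedSq_eq hRd hrd hr.differentiable_deriv_two hθ.differentiable_deriv_two 0 t
  have hRpos : 0 < R (r t) := by nlinarith [neg_one_le_cos (r t / b)]
  refine div_le_of_le_mul₀ (hvt ▸ sqrt_nonneg _) hRpos.le ?_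
  rw [hℓt, hvt]
  exact abs_angularMomentum_le hRpos.le

/-- A torus geodesic with angular momentum ℓ and speed v > 0 never comes closer
to the symmetry axis than |ℓ|/v. -/
theorem torus_geodesic_min_radius
    (a b : ℝ) (hb : 0 < b) (hab : b < a)
    (r θ : ℝ → ℝ) (hr : ContDiff ℝ 2 r) (hθ : ContDiff ℝ 2 θ)
    (hgeo : ∀ t : ℝ,
      deriv (deriv r) t =
        -Real.sin (r t / b) * (a + b * Real.cos (r t / b)) * (deriv θ t) ^ 2 ∧
      deriv (deriv θ) t =
        (2 * Real.sin (r t / b) / (a + b * Real.cos (r t / b))) * deriv r t * deriv θ t)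
    (ℓ v : ℝ)
    (hℓ : ℓ = (a + b * Real.cos (r 0 / b)) ^ 2 * deriv θ 0)
    (hv : v = Real.sqrt ((deriv r 0) ^ 2 +
      (a + b * Real.cos (r 0 / b)) ^ 2 * (deriv θ 0) ^ 2))
    (hvpos : 0 < v) :
    ∀ t : ℝ, |ℓ| / v ≤ a + b * Real.cos (r t / b) :=
  torus_geodesic_min_radius_general a b hb hab r θ hr hθ hgeo ℓ v hℓ hv
end

section
/- Let a > b > 0 and let r, θ : ℝ → ℝ be twice continuously differentiable functions satisfying the torus geodesic equations with angular momentum ℓ ≠ 0. Then θ'(λ) = ℓ/(a + b·cos(r(λ)/b))² for all λ, so |θ'(λ)| ≥ |ℓ|/(a+b)² > 0; consequently θ is strictly monotone on ℝ and θ(λ) tends to +∞ in one time direction and to −∞ in the other (the geodesic winds around the symmetry axis infinitely often). -/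
/-! The geodesic equation for `θ` says exactly that `R(r)² θ'` has zero derivative (Clairaut's
relation on a surface of revolution), so `θ' = ℓ / R(r)²`. Since `0 < a - b ≤ R ≤ a + b`, this
keeps `θ'` of the sign of `ℓ` and at least `|ℓ| / (a + b)²` in absolute value, and a function whose
derivative is bounded away from zero grows at least linearly by the mean value theorem. -/

open Filter Real

section LinearGrowth

variable {f : ℝ → ℝ} {c : ℝ}

theorem tendsto_atTop_and_atBot_of_le_deriv (hf : Differentiable ℝ f) (hc : 0 < c)
    (hf' : ∀ t, c ≤ deriv f t) : Tendsto f atTop atTop ∧ Tendsto f atBot atBot := by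
  constructor
  · refine tendsto_atTop_mono' atTop ?_
      (tendsto_atTop_add_const_left _ (f 0) (tendsto_id.const_mul_atTop hc))
    filter_upwards [eventually_ge_atTop 0] with t ht
    rw [id]
    linarith [mul_sub_le_image_sub_of_le_deriv hf hf' ht]
  · refine tendsto_atBot_mono' atBot ?_
      (tendsto_atBot_add_const_left _ (f 0) (tendsto_id.const_mul_atBot hc))
    filter_upwards [eventually_le_atBot 0] with t ht
    rw [id]
    linarith [mul_sub_le_image_sub_of_le_deriv hf hf' ht]

theorem tendsto_atBot_and_atTop_of_deriv_le (hf : Differentiable ℝ f) (hc : 0 < c)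
    (hf' : ∀ t, deriv f t ≤ -c) : Tendsto f atTop atBot ∧ Tendsto f atBot atTop := by
  have hneg : ∀ t, c ≤ deriv (fun s => -f s) t := fun t => by
    rw [deriv.fun_neg]
    linarith [hf' t]
  obtain ⟨htop, hbot⟩ := tendsto_atTop_and_atBot_of_le_deriv hf.fun_neg hc hneg
  exact ⟨tendsto_neg_atTop_iff.mp htop, tendsto_neg_atBot_iff.mp hbot⟩

end LinearGrowth

theorem sq_mul_eq_sq_mul_of_mul_deriv_eq {R ω : ℝ → ℝ} (hR : Differentiable ℝ R)
    (hω : Differentiable ℝ ω) (h : ∀ t, R t * deriv ω t = -2 * deriv R t * ω t) (t s : ℝ) :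
    R t ^ 2 * ω t = R s ^ 2 * ω s := by
  have hderiv : ∀ t, HasDerivAt (fun t => R t ^ 2 * ω t) 0 t := fun t => by
    refine (((hR t).hasDerivAt.fun_pow 2).fun_mul (hω t).hasDerivAt).congr_deriv ?_
    simp only [Nat.cast_ofNat, pow_one, Nat.add_one_sub_one]
    linear_combination R t * h t
  exact is_const_of_deriv_eq_zero ((hR.pow 2).mul hω) (fun t => (hderiv t).deriv) t s

/-- The distance `R(ρ)` from the symmetry axis of the point at arc length `ρ` along a meridian. -/
noncomputable def torusRadius (a b ρ : ℝ) : ℝ := a + b * cos (ρ / b)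

section TorusRadius

variable {a b : ℝ}

theorem torusRadius_pos (hab : |b| < a) (ρ : ℝ) : 0 < torusRadius a b ρ := by
  have : |b * cos (ρ / b)| ≤ |b| := by
    rw [abs_mul]
    exact mul_le_of_le_one_right (abs_nonneg b) (abs_cos_le_one _)
  unfold torusRadius
  linarith [neg_abs_le (b * cos (ρ / b))]

theorem torusRadius_le (hb : 0 ≤ b) (ρ : ℝ) : torusRadius a b ρ ≤ a + b := by
  unfold torusRadius
  nlinarith [cos_le_one (ρ / b)]

theorem hasDerivAt_torusRadius_comp (hb : b ≠ 0) {r : ℝ → ℝ} {r' t : ℝ} (hr : HasDerivAt r r' t) :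
    HasDerivAt (fun s => torusRadius a b (r s)) (-sin (r t / b) * r') t := by
  refine (((hr.div_const b).cos.const_mul b).const_add a).congr_deriv ?_
  field_simp

theorem torusRadius_sq_mul_deriv_eq (hb : b ≠ 0) {r θ : ℝ → ℝ} (hr : Differentiable ℝ r)
    (hθ : Differentiable ℝ (deriv θ)) (hR : ∀ t, torusRadius a b (r t) ≠ 0)
    (hgeo : ∀ t, deriv (deriv θ) t =
      (2 * sin (r t / b) / torusRadius a b (r t)) * deriv r t * deriv θ t) (t s : ℝ) :
    torusRadius a b (r t) ^ 2 * deriv θ t = torusRadius a b (r s) ^ 2 * deriv θ s := by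
  have hR' : ∀ t, HasDerivAt (fun s => torusRadius a b (r s)) (-sin (r t / b) * deriv r t) t :=
    fun t => hasDerivAt_torusRadius_comp hb (hr t).hasDerivAt
  refine sq_mul_eq_sq_mul_of_mul_deriv_eq (fun t => (hR' t).differentiableAt) hθ
    (fun t => ?_) t s
  rw [(hR' t).deriv, hgeo t]
  field_simp [hR t]

end TorusRadius

/-- A torus geodesic with nonzero angular momentum winds monotonically and
unboundedly around the symmetry axis: θ' = ℓ/R(r)², |θ'| ≥ |ℓ|/(a+b)² > 0,
θ is strictly monotone, and θ tends to ±∞ in the two time directions. -/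
theorem torus_geodesic_winds_forever
    (a b : ℝ) (hb : 0 < b) (hab : b < a)
    (r θ : ℝ → ℝ) (hr : ContDiff ℝ 2 r) (hθ : ContDiff ℝ 2 θ)
    (hgeo : ∀ t : ℝ,
      deriv (deriv r) t =
        -Real.sin (r t / b) * (a + b * Real.cos (r t / b)) * (deriv θ t) ^ 2 ∧
      deriv (deriv θ) t =
        (2 * Real.sin (r t / b) / (a + b * Real.cos (r t / b))) * deriv r t * deriv θ t)
    (ℓ : ℝ)
    (hℓ : ℓ = (a + b * Real.cos (r 0 / b)) ^ 2 * deriv θ 0)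
    (hℓ0 : ℓ ≠ 0) :
    (∀ t : ℝ, deriv θ t = ℓ / (a + b * Real.cos (r t / b)) ^ 2) ∧
    (∀ t : ℝ, |ℓ| / (a + b) ^ 2 ≤ |deriv θ t|) ∧
    0 < |ℓ| / (a + b) ^ 2 ∧
    (StrictMono θ ∨ StrictAnti θ) ∧
    ((Filter.Tendsto θ Filter.atTop Filter.atTop ∧
        Filter.Tendsto θ Filter.atBot Filter.atBot) ∨
      (Filter.Tendsto θ Filter.atTop Filter.atBot ∧
        Filter.Tendsto θ Filter.atBot Filter.atTop)) := by
  have hRpos : ∀ t, 0 < torusRadius a b (r t) := fun t =>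
    torusRadius_pos (by rwa [abs_of_pos hb]) _
  have hθ' : ∀ t, deriv θ t = ℓ / torusRadius a b (r t) ^ 2 := fun t => by
    rw [eq_div_iff (pow_pos (hRpos t) 2).ne', mul_comm, hℓ]
    exact torusRadius_sq_mul_deriv_eq hb.ne' (hr.differentiable (by norm_num))
      ((hθ.iterate_deriv' 1 1).differentiable (by norm_num)) (fun t => (hRpos t).ne')
      (fun t => (hgeo t).2) t 0
  have hmin : ∀ t, |ℓ| / (a + b) ^ 2 ≤ |deriv θ t| := fun t => by
    rw [hθ' t, abs_div, abs_pow, abs_of_pos (hRpos t)]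
    gcongr
    exacts [pow_pos (hRpos t) 2, (hRpos t).le, torusRadius_le hb.le _]
  have hc : 0 < |ℓ| / (a + b) ^ 2 := div_pos (abs_pos.mpr hℓ0) (pow_pos (by linarith) 2)
  have hθd : Differentiable ℝ θ := hθ.differentiable (by norm_num)
  refine ⟨hθ', hmin, hc, ?_⟩
  rcases hℓ0.lt_or_gt with hneg | hpos
  · have hθ'neg : ∀ t, deriv θ t < 0 := fun t =>
      hθ' t ▸ div_neg_of_neg_of_pos hneg (pow_pos (hRpos t) 2)
    have hle : ∀ t, deriv θ t ≤ -(|ℓ| / (a + b) ^ 2) := fun t => by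
      linarith [abs_of_neg (hθ'neg t) ▸ hmin t]
    exact ⟨.inr (strictAnti_of_deriv_neg hθ'neg),
      .inr (tendsto_atBot_and_atTop_of_deriv_le hθd hc hle)⟩
  · have hθ'pos : ∀ t, 0 < deriv θ t := fun t => hθ' t ▸ div_pos hpos (pow_pos (hRpos t) 2)
    have hge : ∀ t, |ℓ| / (a + b) ^ 2 ≤ deriv θ t := fun t => abs_of_pos (hθ'pos t) ▸ hmin t
    exact ⟨.inl (strictMono_of_deriv_pos hθ'pos),
      .inl (tendsto_atTop_and_atBot_of_le_deriv hθd hc hge)⟩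
end

section
/- Unbound geodesics: let a > b > 0 and let r, θ : ℝ → ℝ be twice continuously differentiable functions satisfying the torus geodesic equations with angular momentum ℓ and speed v satisfying ℓ² < (a − b)²·v², and suppose r'(0) > 0. Then r'(λ) ≥ √(v² − ℓ²/(a−b)²) > 0 for all λ ∈ ℝ, r is strictly increasing, and r(λ) → +∞ as λ → +∞ (the radial coordinate is monotone and unbounded, so the geodesic repeatedly crosses the inner and outer equators). -/
/-!
The torus is the surface of revolution `dρ² + R(ρ)² dθ²` with profile `R(ρ) = a + b cos(ρ/b)`,
and along any geodesic of such a metric the angular momentum `ℓ = R(r)² θ'` and the energy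
`r'² + R(r)² θ'²` are conserved. Hence `r'² = v² - ℓ² / R(r)² ≥ v² - ℓ² / (a - b)² > 0`, so `r'`
never vanishes, keeps the sign of `r'(0)`, and is bounded below by a positive constant.
-/

open Real Filter

lemma pos_of_continuous_of_ne_zero {X : Type*} [TopologicalSpace X] [PreconnectedSpace X]
    {f : X → ℝ} (hf : Continuous f) (hne : ∀ x, f x ≠ 0) {x₀ : X} (h₀ : 0 < f x₀) (x : X) :
    0 < f x := by
  by_contra! hx
  obtain ⟨y, hy⟩ := intermediate_value_univ x x₀ hf ⟨hx, h₀.le⟩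
  exact hne y hy

lemma tendsto_atTop_of_le_deriv {f : ℝ → ℝ} (hf : Differentiable ℝ f) {c : ℝ} (hc : 0 < c)
    (hf' : ∀ t, c ≤ deriv f t) : Tendsto f atTop atTop := by
  have hlin : Tendsto (fun t => f 0 + c * t) atTop atTop :=
    tendsto_atTop_add_const_left _ _ (tendsto_id.const_mul_atTop hc)
  refine tendsto_atTop_mono' atTop ?_ hlin
  filter_upwards [eventually_ge_atTop 0] with t ht
  linarith [mul_sub_le_image_sub_of_le_deriv hf hf' ht]

lemma hasDerivAt_comp_sq {R R' r : ℝ → ℝ} (hR : ∀ ρ, HasDerivAt R (R' ρ) ρ)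
    (hr : Differentiable ℝ r) (t : ℝ) :
    HasDerivAt (fun s => R (r s) ^ 2) (2 * R (r t) * (R' (r t) * deriv r t)) t := by
  have h : HasDerivAt (fun s => R (r s)) (R' (r t) * deriv r t) t :=
    (hR (r t)).comp t (hr t).hasDerivAt
  exact (h.pow 2).congr_deriv (by ring)

/-- Geodesic equations of the metric `dρ² + R(ρ)² dθ²`, where `R'` is the derivative of `R`. -/
def IsWarpedGeodesic (R R' r θ : ℝ → ℝ) : Prop :=
  ∀ t, deriv (deriv r) t = R (r t) * R' (r t) * deriv θ t ^ 2 ∧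
    deriv (deriv θ) t = -(2 * R' (r t) / R (r t)) * deriv r t * deriv θ t

noncomputable def angularMomentum (R r θ : ℝ → ℝ) (t : ℝ) : ℝ := R (r t) ^ 2 * deriv θ t

noncomputable def energy (R r θ : ℝ → ℝ) (t : ℝ) : ℝ := deriv r t ^ 2 + R (r t) ^ 2 * deriv θ t ^ 2

namespace IsWarpedGeodesic

variable {R R' r θ : ℝ → ℝ} (hR : ∀ ρ, HasDerivAt R (R' ρ) ρ)
  (hr : ContDiff ℝ 2 r) (hθ : ContDiff ℝ 2 θ)

include hR hr hθ in
theorem angularMomentum_eq (hg : IsWarpedGeodesic R R' r θ) (t : ℝ) :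
    angularMomentum R r θ t = angularMomentum R r θ 0 := by
  have hL : ∀ s, HasDerivAt (angularMomentum R r θ) 0 s := fun s => by
    refine ((hasDerivAt_comp_sq hR (hr.differentiable two_ne_zero) s).mul
      (hθ.differentiable_deriv_two s).hasDerivAt).congr_deriv ?_
    rw [(hg s).2]
    field_simp
    ring
  exact is_const_of_deriv_eq_zero (fun s => (hL s).differentiableAt) (fun s => (hL s).deriv) t 0

include hR hr hθ in
theorem energy_eq (hg : IsWarpedGeodesic R R' r θ) (t : ℝ) :
    energy R r θ t = energy R r θ 0 := by
  have hE : ∀ s, HasDerivAt (energy R r θ) 0 s := fun s => by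
    refine (((hr.differentiable_deriv_two s).hasDerivAt.pow 2).add
      ((hasDerivAt_comp_sq hR (hr.differentiable two_ne_zero) s).mul
        ((hθ.differentiable_deriv_two s).hasDerivAt.pow 2))).congr_deriv ?_
    rw [Pi.pow_apply, (hg s).1, (hg s).2]
    field_simp
    ring
  exact is_const_of_deriv_eq_zero (fun s => (hE s).differentiableAt) (fun s => (hE s).deriv) t 0

include hR hr hθ in
theorem deriv_sq_eq (hg : IsWarpedGeodesic R R' r θ) (t : ℝ) :
    deriv r t ^ 2 = energy R r θ 0 - angularMomentum R r θ 0 ^ 2 / R (r t) ^ 2 := by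
  rw [← angularMomentum_eq hR hr hθ hg t, ← energy_eq hR hr hθ hg t, angularMomentum, energy]
  field_simp
  ring

include hR hr hθ in
theorem sub_le_deriv_sq (hg : IsWarpedGeodesic R R' r θ) {m : ℝ} (hm : 0 < m)
    (hmR : ∀ ρ, m ≤ R ρ) (t : ℝ) :
    energy R r θ 0 - angularMomentum R r θ 0 ^ 2 / m ^ 2 ≤ deriv r t ^ 2 := by
  rw [deriv_sq_eq hR hr hθ hg t]
  gcongr
  exact hmR (r t)

include hR hr hθ in
theorem sqrt_le_deriv (hg : IsWarpedGeodesic R R' r θ) {m : ℝ} (hm : 0 < m)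
    (hmR : ∀ ρ, m ≤ R ρ) (hunb : angularMomentum R r θ 0 ^ 2 / m ^ 2 < energy R r θ 0)
    (hr0 : 0 < deriv r 0) (t : ℝ) :
    √(energy R r θ 0 - angularMomentum R r θ 0 ^ 2 / m ^ 2) ≤ deriv r t := by
  have hsq := sub_le_deriv_sq hR hr hθ hg hm hmR
  have hpos : 0 < deriv r t :=
    pos_of_continuous_of_ne_zero (hr.continuous_deriv one_le_two)
      (fun s hs => by nlinarith [hsq s]) hr0 t
  exact sqrt_le_iff.mpr ⟨hpos.le, hsq t⟩

end IsWarpedGeodesic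

lemma hasDerivAt_add_mul_cos_div (a : ℝ) {b : ℝ} (hb : b ≠ 0) (ρ : ℝ) :
    HasDerivAt (fun ρ => a + b * cos (ρ / b)) (-sin (ρ / b)) ρ := by
  refine ((((hasDerivAt_id' ρ).div_const b).cos).const_mul b |>.const_add a).congr_deriv ?_
  field_simp

lemma sub_le_add_mul_cos (a : ℝ) {b : ℝ} (hb : 0 ≤ b) (x : ℝ) : a - b ≤ a + b * cos x := by
  nlinarith [neg_one_le_cos x]

/-- Unbound torus geodesics: if ℓ² < (a-b)²v² and r'(0) > 0, the radial coordinate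
is strictly increasing with r' ≥ √(v² - ℓ²/(a-b)²) > 0 and r → +∞. -/
theorem torus_geodesic_unbound
    (a b : ℝ) (hb : 0 < b) (hab : b < a)
    (r θ : ℝ → ℝ) (hr : ContDiff ℝ 2 r) (hθ : ContDiff ℝ 2 θ)
    (hgeo : ∀ t : ℝ,
      deriv (deriv r) t =
        -Real.sin (r t / b) * (a + b * Real.cos (r t / b)) * (deriv θ t) ^ 2 ∧
      deriv (deriv θ) t =
        (2 * Real.sin (r t / b) / (a + b * Real.cos (r t / b))) * deriv r t * deriv θ t)
    (ℓ v : ℝ)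
    (hℓ : ℓ = (a + b * Real.cos (r 0 / b)) ^ 2 * deriv θ 0)
    (hv : v = Real.sqrt ((deriv r 0) ^ 2 +
      (a + b * Real.cos (r 0 / b)) ^ 2 * (deriv θ 0) ^ 2))
    (hunb : ℓ ^ 2 < (a - b) ^ 2 * v ^ 2)
    (hr0 : 0 < deriv r 0) :
    0 < Real.sqrt (v ^ 2 - ℓ ^ 2 / (a - b) ^ 2) ∧
    (∀ t : ℝ, Real.sqrt (v ^ 2 - ℓ ^ 2 / (a - b) ^ 2) ≤ deriv r t) ∧
    StrictMono r ∧
    Filter.Tendsto r Filter.atTop Filter.atTop := by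
  set R : ℝ → ℝ := fun ρ => a + b * cos (ρ / b)
  have hg : IsWarpedGeodesic R (fun ρ => -sin (ρ / b)) r θ := fun t => by
    obtain ⟨hgr, hgθ⟩ := hgeo t
    exact ⟨by rw [hgr]; ring, by rw [hgθ]; ring⟩
  have hm : 0 < a - b := sub_pos.2 hab
  have hunb' : ℓ ^ 2 / (a - b) ^ 2 < v ^ 2 := by rw [div_lt_iff₀ (by positivity)]; linarith
  have hc : 0 < √(v ^ 2 - ℓ ^ 2 / (a - b) ^ 2) := sqrt_pos.2 (sub_pos.2 hunb')
  have hbound : ∀ t, √(v ^ 2 - ℓ ^ 2 / (a - b) ^ 2) ≤ deriv r t := by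
    have hv' : v ^ 2 = energy R r θ 0 := by rw [hv, sq_sqrt (by positivity)]; rfl
    have hℓ' : ℓ = angularMomentum R r θ 0 := hℓ
    rw [hv', hℓ'] at hunb' ⊢
    exact hg.sqrt_le_deriv (hasDerivAt_add_mul_cos_div a hb.ne') hr hθ hm
      (fun ρ => sub_le_add_mul_cos a hb.le _) hunb' hr0
  exact ⟨hc, hbound, strictMono_of_deriv_pos fun t => hc.trans_le (hbound t),
    tendsto_atTop_of_le_deriv (hr.differentiable two_ne_zero) hc hbound⟩
end

section
/- Inner equator crossing angle: let a > b > 0 and let r, θ : ℝ → ℝ be twice continuously differentiable functions satisfying the torus geodesic equations with r(0) = 0 and speed v > 0, and define sin β(λ) = (a + b·cos(r(λ)/b))·θ'(λ)/v. If the geodesic crosses the inner equator at time λ₁, i.e. cos(r(λ₁)/b) = −1, then sin β(λ₁) = ((a+b)/(a−b))·sin β(0). -/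
/-!
Clairaut's relation: along a geodesic of a surface of revolution with profile radius `R`, the
angular momentum `R(r)² θ'` is conserved, because the `θ`-equation says exactly that its
derivative `2 R R'(r) r' θ' + R² θ''` vanishes. At the outer equator `R = a + b`, at the inner
one `R = a - b`, so `(a - b)² θ'(λ₁) = (a + b)² θ'(0)`, which is the claim after dividing by
`(a - b) v`.
-/

open Real

section Clairaut

variable {R R' r θ : ℝ → ℝ}

-- Where `R (r t) = 0` the equation reads `θ'' = 0` (division by zero), and the derivative vanishes anyway.
theorem hasDerivAt_angularMomentum {t : ℝ} (hR : HasDerivAt R (R' (r t)) (r t))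
    (hr : DifferentiableAt ℝ r t) (hθ : DifferentiableAt ℝ (deriv θ) t)
    (hgeo : deriv (deriv θ) t = -(2 * R' (r t) / R (r t)) * deriv r t * deriv θ t) :
    HasDerivAt (fun s => R (r s) ^ 2 * deriv θ s) 0 t := by
  refine (((hR.comp t hr.hasDerivAt).pow 2).mul hθ.hasDerivAt).congr_deriv ?_
  simp only [Pi.pow_apply, Function.comp_apply, hgeo]
  rcases eq_or_ne (R (r t)) 0 with h0 | h0
  · simp [h0]
  · field_simp
    ring

theorem angularMomentum_eq (hR : ∀ ρ, HasDerivAt R (R' ρ) ρ) (hr : Differentiable ℝ r)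
    (hθ : Differentiable ℝ (deriv θ))
    (hgeo : ∀ t, deriv (deriv θ) t = -(2 * R' (r t) / R (r t)) * deriv r t * deriv θ t)
    (s t : ℝ) : R (r s) ^ 2 * deriv θ s = R (r t) ^ 2 * deriv θ t :=
  is_const_of_deriv_eq_zero
    (fun x => (hasDerivAt_angularMomentum (hR _) (hr x) (hθ x) (hgeo x)).differentiableAt)
    (fun x => (hasDerivAt_angularMomentum (hR _) (hr x) (hθ x) (hgeo x)).deriv) s t

end Clairaut

theorem hasDerivAt_torusRadius (a b ρ : ℝ) :
    HasDerivAt (fun ρ => a + b * cos (ρ / b)) (-sin (ρ / b)) ρ := by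
  rcases eq_or_ne b 0 with rfl | hb
  · simpa using hasDerivAt_const ρ a
  · refine ((((hasDerivAt_id ρ).div_const b).cos.const_mul b).const_add a).congr_deriv ?_
    field_simp
    simp

theorem torus_geodesic_inner_crossing_angle_general
    (a b : ℝ)
    (r θ : ℝ → ℝ) (hr : ContDiff ℝ 2 r) (hθ : ContDiff ℝ 2 θ)
    (hgeo : ∀ t : ℝ,
      deriv (deriv r) t =
        -Real.sin (r t / b) * (a + b * Real.cos (r t / b)) * (deriv θ t) ^ 2 ∧
      deriv (deriv θ) t =
        (2 * Real.sin (r t / b) / (a + b * Real.cos (r t / b))) * deriv r t * deriv θ t)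
    (hr0 : r 0 = 0)
    (v : ℝ)
    (t₁ : ℝ) (hcross : Real.cos (r t₁ / b) = -1) :
    (a + b * Real.cos (r t₁ / b)) * deriv θ t₁ / v =
      ((a + b) / (a - b)) * ((a + b) * deriv θ 0 / v) := by
  have hclairaut := angularMomentum_eq (hasDerivAt_torusRadius a b)
    (hr.differentiable (by norm_num)) hθ.differentiable_deriv_two
    (fun t => by rw [(hgeo t).2, mul_neg, neg_div, neg_neg]) t₁ 0
  simp only [hcross, hr0, zero_div, cos_zero] at hclairaut
  suffices (a - b) * deriv θ t₁ = (a + b) / (a - b) * ((a + b) * deriv θ 0) by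
    rw [hcross, ← mul_div_assoc, ← this]
    ring
  rcases eq_or_ne (a - b) 0 with hab | hab
  · simp [hab]
  · field_simp
    linear_combination hclairaut

/-- Inner equator crossing angle: a geodesic from the outer equator crossing the
inner equator does so with sin β(t₁) = ((a+b)/(a-b))·sin β(0), where
sin β(t) = R(r(t))·θ'(t)/v. -/
theorem torus_geodesic_inner_crossing_angle
    (a b : ℝ) (hb : 0 < b) (hab : b < a)
    (r θ : ℝ → ℝ) (hr : ContDiff ℝ 2 r) (hθ : ContDiff ℝ 2 θ)
    (hgeo : ∀ t : ℝ,
      deriv (deriv r) t =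
        -Real.sin (r t / b) * (a + b * Real.cos (r t / b)) * (deriv θ t) ^ 2 ∧
      deriv (deriv θ) t =
        (2 * Real.sin (r t / b) / (a + b * Real.cos (r t / b))) * deriv r t * deriv θ t)
    (hr0 : r 0 = 0)
    (v : ℝ)
    (hv : v = Real.sqrt ((deriv r 0) ^ 2 +
      (a + b * Real.cos (r 0 / b)) ^ 2 * (deriv θ 0) ^ 2))
    (hvpos : 0 < v)
    (t₁ : ℝ) (hcross : Real.cos (r t₁ / b) = -1) :
    (a + b * Real.cos (r t₁ / b)) * deriv θ t₁ / v =
      ((a + b) / (a - b)) * ((a + b) * deriv θ 0 / v) :=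
  torus_geodesic_inner_crossing_angle_general a b r θ hr hθ hgeo hr0 v t₁ hcross
end

section
/- Every geodesic on a ring torus other than the inner equator passes through the outer equator: let a > b > 0 and let r, θ : ℝ → ℝ be twice continuously differentiable functions satisfying the torus geodesic equations with speed v > 0. If the geodesic is not the inner equator, i.e. there exists λ₀ with cos(r(λ₀)/b) ≠ −1, then there exists λ ∈ ℝ with cos(r(λ)/b) = 1 (the geodesic crosses the outer equator). -/
/-!
Along a geodesic the energy `E = r'² + R²θ'²` and Clairaut's angular momentum `L = R²θ'` are
conserved, so `r'² = E - L²/R²`, where `R ≥ a - b`. If the geodesic never reaches the outer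
equator, `r/b` stays strictly between two consecutive multiples of `2π`, so `r` is bounded.
If `L² < E(a-b)²`, then `|r'|` is bounded away from `0`, which makes `r` unbounded. Otherwise
`|u'| ≤ K|u|` for `u = 1 + cos(r/b)`, so by Grönwall a geodesic touching the inner equator is the
inner equator. Hence `sin(r/b) ≠ 0`, and `θ' ≠ 0` because `L ≠ 0`, so `r'' = -sin(r/b) R θ'²`
has constant sign: `r` is strictly convex or strictly concave on `ℝ`, hence unbounded.
-/

open Real Set Bornology

theorem exists_int_forall_mem_Ioo_of_forall_ne {f : ℝ → ℝ} (hf : Continuous f) {L : ℝ}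
    (hL : 0 < L) (h : ∀ t (k : ℤ), f t ≠ k * L) :
    ∃ k : ℤ, ∀ t, f t ∈ Ioo (k * L) ((k + 1) * L) := by
  set k := ⌊f 0 / L⌋
  have hk₀ : k * L < f 0 :=
    ((le_div_iff₀ hL).1 (Int.floor_le _)).lt_of_ne (h 0 k).symm
  have hk₁ : f 0 < (k + 1) * L := (div_lt_iff₀ hL).1 (Int.lt_floor_add_one _)
  refine ⟨k, fun t => ⟨?_, ?_⟩⟩
  · by_contra! ht
    obtain ⟨s, hs⟩ := intermediate_value_univ t 0 hf ⟨ht, hk₀.le⟩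
    exact h s k hs
  · by_contra! ht
    obtain ⟨s, hs⟩ := intermediate_value_univ 0 t hf ⟨hk₁.le, ht⟩
    exact h s (k + 1) (by push_cast; exact hs)

theorem forall_pos_or_forall_neg_of_continuous {X : Type*} [TopologicalSpace X]
    [PreconnectedSpace X] {f : X → ℝ} (hf : Continuous f) (h : ∀ x, f x ≠ 0) :
    (∀ x, 0 < f x) ∨ ∀ x, f x < 0 := by
  by_contra! hsign
  obtain ⟨⟨x, hx⟩, ⟨y, hy⟩⟩ := hsign
  obtain ⟨z, hz⟩ := intermediate_value_univ x y hf ⟨hx, hy⟩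
  exact h z hz

theorem not_isBounded_range_of_le_abs_deriv_Ioi {f : ℝ → ℝ} (hf : Differentiable ℝ f)
    {δ t₀ : ℝ} (hδ : 0 < δ) (hd : ∀ t > t₀, δ ≤ |deriv f t|) : ¬IsBounded (range f) := by
  rw [isBounded_iff_forall_norm_le]
  rintro ⟨C, hC⟩
  replace hC : ∀ t, |f t| ≤ C := fun t => hC _ (mem_range_self t)
  set T := t₀ + (2 * C + 1) / δ
  have hT : t₀ < T := by
    have := (abs_nonneg (f 0)).trans (hC 0)
    simp only [T, lt_add_iff_pos_right]
    positivity
  obtain ⟨c, hc, hslope⟩ :=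
    exists_deriv_eq_slope f hT hf.continuous.continuousOn hf.differentiableOn
  have : 2 * C + 1 ≤ |f T - f t₀| :=
    calc 2 * C + 1 = δ * (T - t₀) := by simp only [T]; field_simp; ring
      _ ≤ |deriv f c| * (T - t₀) := by gcongr; exact hd c hc.1
      _ = |f T - f t₀| := by
        rw [hslope, abs_div, abs_of_pos (sub_pos.2 hT), div_mul_cancel₀ _ (sub_pos.2 hT).ne']
  linarith [abs_sub (f T) (f t₀), hC T, hC t₀]

theorem not_isBounded_range_of_le_abs_deriv_Iio {f : ℝ → ℝ} (hf : Differentiable ℝ f)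
    {δ t₀ : ℝ} (hδ : 0 < δ) (hd : ∀ t < t₀, δ ≤ |deriv f t|) : ¬IsBounded (range f) := by
  rw [← neg_surjective.range_comp f]
  refine not_isBounded_range_of_le_abs_deriv_Ioi (hf.comp differentiable_neg) hδ
    (t₀ := -t₀) fun t ht => ?_
  rw [Function.comp_def, deriv_comp_neg, abs_neg]
  exact hd _ (by linarith)

theorem not_isBounded_range_of_strictMono_deriv {f : ℝ → ℝ} (hf : Differentiable ℝ f)
    (hmono : StrictMono (deriv f)) : ¬IsBounded (range f) := by
  rcases lt_or_ge 0 (deriv f 1) with h₁ | h₁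
  · exact not_isBounded_range_of_le_abs_deriv_Ioi hf h₁
      fun t ht => (hmono ht).le.trans (le_abs_self _)
  · have h₀ : deriv f 0 < 0 := (hmono zero_lt_one).trans_le h₁
    exact not_isBounded_range_of_le_abs_deriv_Iio hf (neg_pos.2 h₀)
      fun t ht => (neg_le_neg (hmono ht).le).trans (neg_le_abs _)

theorem not_isBounded_range_of_strictAnti_deriv {f : ℝ → ℝ} (hf : Differentiable ℝ f)
    (hanti : StrictAnti (deriv f)) : ¬IsBounded (range f) := by
  rcases lt_or_ge (deriv f 1) 0 with h₁ | h₁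
  · exact not_isBounded_range_of_le_abs_deriv_Ioi hf (neg_pos.2 h₁)
      fun t ht => (neg_le_neg (hanti ht).le).trans (neg_le_abs _)
  · have h₀ : 0 < deriv f 0 := h₁.trans_lt (hanti zero_lt_one)
    exact not_isBounded_range_of_le_abs_deriv_Iio hf h₀
      fun t ht => (hanti ht).le.trans (le_abs_self _)

theorem not_isBounded_range_of_deriv_deriv_ne_zero {f : ℝ → ℝ} (hf : ContDiff ℝ 2 f)
    (h : ∀ t, deriv (deriv f) t ≠ 0) : ¬IsBounded (range f) := by
  have hf'' : Continuous (deriv (deriv f)) := (hf.iterate_deriv' 0 2).continuous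
  rcases forall_pos_or_forall_neg_of_continuous hf'' h with hpos | hneg
  · exact not_isBounded_range_of_strictMono_deriv (hf.differentiable two_ne_zero)
      (strictMono_of_deriv_pos hpos)
  · exact not_isBounded_range_of_strictAnti_deriv (hf.differentiable two_ne_zero)
      (strictAnti_of_deriv_neg hneg)

theorem eq_zero_of_norm_deriv_le_mul_norm {E : Type*} [NormedAddCommGroup E] [NormedSpace ℝ E]
    {f : ℝ → E} (hf : Differentiable ℝ f) {K : ℝ} (hK : ∀ t, ‖deriv f t‖ ≤ K * ‖f t‖)
    {t₁ : ℝ} (h₁ : f t₁ = 0) (t : ℝ) : f t = 0 := by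
  rcases le_total t₁ t with ht | ht
  · exact eq_zero_of_abs_deriv_le_mul_abs_self_of_eq_zero_right hf.continuous.continuousOn
      (fun s _ => (hf s).hasDerivAt.hasDerivWithinAt) h₁ (fun s _ => hK s) t ⟨ht, le_rfl⟩
  · have hf' : Differentiable ℝ fun s => f (-s) := hf.comp differentiable_neg
    simpa using eq_zero_of_abs_deriv_le_mul_abs_self_of_eq_zero_right
      hf'.continuous.continuousOn (fun s _ => (hf' s).hasDerivAt.hasDerivWithinAt)
      (by simpa using h₁) (fun s _ => by rw [deriv_comp_neg, norm_neg]; exact hK _)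
      (-t) ⟨neg_le_neg ht, le_rfl⟩

theorem isBounded_range_of_cos_ne_one {b : ℝ} (hb : 0 < b) {r : ℝ → ℝ} (hr : Continuous r)
    (h : ∀ t, cos (r t / b) ≠ 1) : IsBounded (range r) := by
  obtain ⟨k, hk⟩ := exists_int_forall_mem_Ioo_of_forall_ne hr (by positivity : 0 < 2 * π * b)
    fun t k hk => h t ((cos_eq_one_iff _).2 ⟨k, by rw [hk]; field_simp⟩)
  exact (Metric.isBounded_Ioo _ _).subset (range_subset_iff.2 hk)

theorem sin_sq_le_two_mul_one_add_cos (x : ℝ) : sin x ^ 2 ≤ 2 * (1 + cos x) := by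
  nlinarith [sin_sq_add_cos_sq x, neg_one_le_cos x, cos_le_one x]

noncomputable section

namespace Torus

def radius (a b ρ : ℝ) : ℝ := a + b * cos (ρ / b)

theorem sub_le_radius {a b : ℝ} (hb : 0 ≤ b) (ρ : ℝ) : a - b ≤ radius a b ρ := by
  unfold radius
  nlinarith [neg_one_le_cos (ρ / b)]

theorem radius_pos {a b : ℝ} (hb : 0 ≤ b) (hab : b < a) (ρ : ℝ) : 0 < radius a b ρ := by
  linarith [sub_le_radius (a := a) hb ρ]

theorem hasDerivAt_radius_comp (a : ℝ) {b : ℝ} (hb : b ≠ 0) {r : ℝ → ℝ} {t : ℝ}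
    (hr : DifferentiableAt ℝ r t) :
    HasDerivAt (fun s => radius a b (r s)) (-sin (r t / b) * deriv r t) t := by
  refine (((hr.hasDerivAt.div_const b).cos.const_mul b).const_add a).congr_deriv ?_
  field_simp

structure IsGeodesic (a b : ℝ) (r θ : ℝ → ℝ) : Prop where
  contDiff_r : ContDiff ℝ 2 r
  contDiff_θ : ContDiff ℝ 2 θ
  deriv_deriv_r (t : ℝ) :
    deriv (deriv r) t = -sin (r t / b) * radius a b (r t) * deriv θ t ^ 2
  deriv_deriv_θ (t : ℝ) :
    deriv (deriv θ) t = 2 * sin (r t / b) / radius a b (r t) * deriv r t * deriv θ t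

def energy (a b : ℝ) (r θ : ℝ → ℝ) (t : ℝ) : ℝ :=
  deriv r t ^ 2 + radius a b (r t) ^ 2 * deriv θ t ^ 2

def angularMomentum (a b : ℝ) (r θ : ℝ → ℝ) (t : ℝ) : ℝ :=
  radius a b (r t) ^ 2 * deriv θ t

namespace IsGeodesic

variable {a b : ℝ} {r θ : ℝ → ℝ}

theorem energy_eq (hg : IsGeodesic a b r θ) (hb : 0 < b) (hab : b < a) (t : ℝ) :
    energy a b r θ t = energy a b r θ 0 := by
  have hr := hg.contDiff_r.differentiable two_ne_zero
  have hr' := hg.contDiff_r.differentiable_deriv_two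
  have hθ' := hg.contDiff_θ.differentiable_deriv_two
  have hderiv (s : ℝ) : HasDerivAt (energy a b r θ) 0 s := by
    have hR := (radius_pos hb.le hab (r s)).ne'
    refine (((hr' s).hasDerivAt.pow 2).add (((hasDerivAt_radius_comp a hb.ne' (hr s)).pow 2).mul
      ((hθ' s).hasDerivAt.pow 2))).congr_deriv ?_
    rw [hg.deriv_deriv_r, hg.deriv_deriv_θ, Pi.pow_apply, Pi.pow_apply]
    field_simp
    ring
  exact is_const_of_deriv_eq_zero (fun s => (hderiv s).differentiableAt)
    (fun s => (hderiv s).deriv) t 0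

theorem angularMomentum_eq (hg : IsGeodesic a b r θ) (hb : 0 < b) (hab : b < a) (t : ℝ) :
    angularMomentum a b r θ t = angularMomentum a b r θ 0 := by
  have hr := hg.contDiff_r.differentiable two_ne_zero
  have hθ' := hg.contDiff_θ.differentiable_deriv_two
  have hderiv (s : ℝ) : HasDerivAt (angularMomentum a b r θ) 0 s := by
    have hR := (radius_pos hb.le hab (r s)).ne'
    refine (((hasDerivAt_radius_comp a hb.ne' (hr s)).pow 2).mul
      (hθ' s).hasDerivAt).congr_deriv ?_
    rw [hg.deriv_deriv_θ, Pi.pow_apply]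
    field_simp
    ring
  exact is_const_of_deriv_eq_zero (fun s => (hderiv s).differentiableAt)
    (fun s => (hderiv s).deriv) t 0

theorem deriv_sq_eq (hg : IsGeodesic a b r θ) (hb : 0 < b) (hab : b < a) (t : ℝ) :
    deriv r t ^ 2 =
      energy a b r θ 0 - angularMomentum a b r θ 0 ^ 2 / radius a b (r t) ^ 2 := by
  have hR := (radius_pos hb.le hab (r t)).ne'
  rw [← hg.energy_eq hb hab t, ← hg.angularMomentum_eq hb hab t, energy, angularMomentum]
  field_simp
  ring

theorem not_isBounded_range_of_angularMomentum_sq_lt (hg : IsGeodesic a b r θ) (hb : 0 < b)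
    (hab : b < a) (hL : angularMomentum a b r θ 0 ^ 2 < energy a b r θ 0 * (a - b) ^ 2) :
    ¬IsBounded (range r) := by
  have hab' : 0 < a - b := sub_pos.2 hab
  have hδ : 0 < energy a b r θ 0 - angularMomentum a b r θ 0 ^ 2 / (a - b) ^ 2 := by
    rw [sub_pos, div_lt_iff₀ (by positivity)]
    exact hL
  refine not_isBounded_range_of_le_abs_deriv_Ioi (hg.contDiff_r.differentiable two_ne_zero)
    (sqrt_pos.2 hδ) (t₀ := 0) fun t _ => ?_
  rw [← sqrt_sq_eq_abs, hg.deriv_sq_eq hb hab]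
  have hR := sub_le_radius (a := a) hb.le (r t)
  gcongr

theorem deriv_sq_le_of_le_angularMomentum_sq (hg : IsGeodesic a b r θ) (hb : 0 < b)
    (hab : b < a) (hL : energy a b r θ 0 * (a - b) ^ 2 ≤ angularMomentum a b r θ 0 ^ 2)
    (t : ℝ) :
    deriv r t ^ 2 ≤ 2 * energy a b r θ 0 / (a - b) * (radius a b (r t) - (a - b)) := by
  have hab' : 0 < a - b := sub_pos.2 hab
  have hR := sub_le_radius (a := a) hb.le (r t)
  have hE : 0 ≤ energy a b r θ 0 := by unfold energy; positivity
  set E := energy a b r θ 0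
  set R := radius a b (r t)
  have hR₀ : 0 < R := hab'.trans_le hR
  have hfactor : E * (R + (a - b)) / R ^ 2 ≤ 2 * E / (a - b) := by
    rw [div_le_div_iff₀ (by positivity) hab']
    nlinarith [mul_nonneg hE (mul_nonneg (sub_nonneg.2 hR) (by positivity : 0 ≤ 2 * R + (a - b)))]
  calc deriv r t ^ 2 = E - angularMomentum a b r θ 0 ^ 2 / R ^ 2 := hg.deriv_sq_eq hb hab t
    _ ≤ E - E * (a - b) ^ 2 / R ^ 2 := by gcongr
    _ = E * (R + (a - b)) / R ^ 2 * (R - (a - b)) := by field_simp; ring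
    _ ≤ 2 * E / (a - b) * (R - (a - b)) := by gcongr

theorem cos_eq_neg_one_of_le_angularMomentum_sq (hg : IsGeodesic a b r θ) (hb : 0 < b)
    (hab : b < a) (hL : energy a b r θ 0 * (a - b) ^ 2 ≤ angularMomentum a b r θ 0 ^ 2)
    {t₁ : ℝ} (h₁ : cos (r t₁ / b) = -1) (t : ℝ) : cos (r t / b) = -1 := by
  have hr := hg.contDiff_r.differentiable two_ne_zero
  set u : ℝ → ℝ := fun s => 1 + cos (r s / b)
  have hu (s : ℝ) : HasDerivAt u (-sin (r s / b) * (deriv r s / b)) s :=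
    ((hr s).hasDerivAt.div_const b).cos.const_add 1
  have hu_nonneg (s : ℝ) : 0 ≤ u s := by simp only [u]; linarith [neg_one_le_cos (r s / b)]
  set C := 4 * energy a b r θ 0 / (b * (a - b))
  have hbound (s : ℝ) : deriv u s ^ 2 ≤ C * u s ^ 2 := by
    have hr' := hg.deriv_sq_le_of_le_angularMomentum_sq hb hab hL s
    rw [show radius a b (r s) - (a - b) = b * u s by simp only [radius, u]; ring] at hr'
    calc deriv u s ^ 2 = sin (r s / b) ^ 2 * deriv r s ^ 2 / b ^ 2 := by
          rw [(hu s).deriv]; field_simp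
      _ ≤ 2 * u s * (2 * energy a b r θ 0 / (a - b) * (b * u s)) / b ^ 2 := by
          gcongr
          · exact mul_nonneg (by positivity) (hu_nonneg s)
          · exact sin_sq_le_two_mul_one_add_cos _
      _ = C * u s ^ 2 := by simp only [C]; field_simp; ring
  have hu₁ : u t₁ = 0 := by simp only [u, h₁]; norm_num
  have := eq_zero_of_norm_deriv_le_mul_norm (fun s => (hu s).differentiableAt) (K := √C)
    (fun s => by
      rw [norm_eq_abs, norm_eq_abs, ← sqrt_sq_eq_abs (u s), ← sqrt_mul' _ (sq_nonneg _)]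
      exact abs_le_sqrt (hbound s)) hu₁ t
  simp only [u] at this
  linarith

theorem not_isBounded_range_of_sin_ne_zero (hg : IsGeodesic a b r θ) (hb : 0 < b) (hab : b < a)
    (hE : 0 < energy a b r θ 0)
    (hL : energy a b r θ 0 * (a - b) ^ 2 ≤ angularMomentum a b r θ 0 ^ 2)
    (hsin : ∀ t, sin (r t / b) ≠ 0) : ¬IsBounded (range r) := by
  have hL₀ : angularMomentum a b r θ 0 ≠ 0 := by
    intro h
    rw [h] at hL
    nlinarith [mul_pos hE (pow_pos (sub_pos.2 hab) 2)]
  refine not_isBounded_range_of_deriv_deriv_ne_zero hg.contDiff_r fun t => ?_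
  have hθ : deriv θ t ≠ 0 := fun h =>
    hL₀ (by rw [← hg.angularMomentum_eq hb hab t, angularMomentum, h, mul_zero])
  rw [hg.deriv_deriv_r]
  exact mul_ne_zero (mul_ne_zero (neg_ne_zero.2 (hsin t)) (radius_pos hb.le hab _).ne')
    (pow_ne_zero 2 hθ)

end IsGeodesic

end Torus

end

/-- Every geodesic on a ring torus other than the inner equator passes through the
outer equator: if cos(r(t₀)/b) ≠ -1 for some t₀, then cos(r(t)/b) = 1 for some t. -/
theorem torus_geodesic_meets_outer_equator
    (a b : ℝ) (hb : 0 < b) (hab : b < a)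
    (r θ : ℝ → ℝ) (hr : ContDiff ℝ 2 r) (hθ : ContDiff ℝ 2 θ)
    (hgeo : ∀ t : ℝ,
      deriv (deriv r) t =
        -Real.sin (r t / b) * (a + b * Real.cos (r t / b)) * (deriv θ t) ^ 2 ∧
      deriv (deriv θ) t =
        (2 * Real.sin (r t / b) / (a + b * Real.cos (r t / b))) * deriv r t * deriv θ t)
    (v : ℝ)
    (hv : v = Real.sqrt ((deriv r 0) ^ 2 +
      (a + b * Real.cos (r 0 / b)) ^ 2 * (deriv θ 0) ^ 2))
    (hvpos : 0 < v)
    (hnotinner : ∃ t₀ : ℝ, Real.cos (r t₀ / b) ≠ -1) :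
    ∃ t : ℝ, Real.cos (r t / b) = 1 := by
  have hg : Torus.IsGeodesic a b r θ := ⟨hr, hθ, fun t => (hgeo t).1, fun t => (hgeo t).2⟩
  have hE : 0 < Torus.energy a b r θ 0 := by
    rw [hv] at hvpos
    exact sqrt_pos.1 hvpos
  by_contra! houter
  have hbdd := isBounded_range_of_cos_ne_one hb hr.continuous houter
  obtain ⟨t₀, ht₀⟩ := hnotinner
  rcases lt_or_ge (Torus.angularMomentum a b r θ 0 ^ 2) (Torus.energy a b r θ 0 * (a - b) ^ 2)
    with hL | hL
  · exact hg.not_isBounded_range_of_angularMomentum_sq_lt hb hab hL hbdd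
  · refine hg.not_isBounded_range_of_sin_ne_zero hb hab hE hL (fun t hsin => ?_) hbdd
    rcases sin_eq_zero_iff_cos_eq.1 hsin with h | h
    exacts [houter t h, ht₀ (hg.cos_eq_neg_one_of_le_angularMomentum_sq hb hab hL h t₀)]
end

section
/- On the horn torus all nonradial geodesics are bound: let b > 0 and set R(ρ) = b·(1 + cos(ρ/b)). Let r, θ : ℝ → ℝ be twice continuously differentiable with r(0) = 0, satisfying r''(λ) = −sin(r(λ)/b)·R(r(λ))·θ'(λ)² for all λ and with λ ↦ R(r(λ))²·θ'(λ) constant, equal to ℓ ≠ 0; let v = √(r'(0)² + R(r(0))²·θ'(0)²). Then for all λ ∈ ℝ: b·(1 + cos(r(λ)/b)) ≥ |ℓ|/v > 0, hence cos(r(λ)/b) > −1 and |r(λ)| < π·b; the geodesic never reaches the degenerate inner equator point on the symmetry axis. -/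
/-!
Eliminating `θ'` through the conserved angular momentum `R(r)² θ' = ℓ` turns the radial equation
into the one-dimensional motion `r'' = R'(r) ℓ² / R(r)³` in the effective potential `ℓ² / R²`,
whose energy `r'² + ℓ² / R(r)²` is the squared speed `v²`. Since `ℓ ≠ 0`, the conservation law
forces `R(r) ≠ 0` along the geodesic, and energy conservation then gives `ℓ² / R(r)² ≤ v²`, i.e.
`R(r) ≥ |ℓ| / v`. As `R` vanishes at `±π b` and `r` starts at `0`, continuity keeps `|r| < π b`.
-/

open Real

noncomputable section

/-- The squared speed `r'² + R(r)² θ'²` of a geodesic on the surface of revolution with profile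
`R`, with `θ'` eliminated through `R(r)² θ' = ℓ`. -/
def radialEnergy (R r : ℝ → ℝ) (ℓ t : ℝ) : ℝ :=
  deriv r t ^ 2 + ℓ ^ 2 / R (r t) ^ 2

section RadialEnergy

variable {R R' r ω : ℝ → ℝ} {ℓ : ℝ}

theorem hasDerivAt_radialEnergy (hR : ∀ ρ, HasDerivAt R (R' ρ) ρ) (hr : ContDiff ℝ 2 r)
    (hrad : ∀ t, deriv (deriv r) t = R' (r t) * R (r t) * ω t ^ 2)
    (hcons : ∀ t, R (r t) ^ 2 * ω t = ℓ) (hne : ∀ t, R (r t) ≠ 0) (t : ℝ) :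
    HasDerivAt (radialEnergy R r ℓ) 0 t := by
  have hr' : HasDerivAt r (deriv r t) t :=
    (hr.differentiable (by norm_num) t).hasDerivAt
  have hr'' : HasDerivAt (deriv r) (deriv (deriv r) t) t :=
    ((hr.iterate_deriv' 1 1).differentiable (by norm_num) t).hasDerivAt
  have hRr : HasDerivAt (fun s => R (r s)) (R' (r t) * deriv r t) t := (hR (r t)).comp t hr'
  have hE := (hr''.pow 2).add (((hRr.pow 2).inv (pow_ne_zero 2 (hne t))).const_mul (ℓ ^ 2))
  refine hE.congr_deriv ?_
  have hω : ω t = ℓ / R (r t) ^ 2 := by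
    rw [eq_div_iff (pow_ne_zero 2 (hne t)), mul_comm, hcons t]
  have := hne t
  simp only [Pi.pow_apply]
  rw [hrad t, hω]
  field_simp
  ring

theorem radialEnergy_eq (hR : ∀ ρ, HasDerivAt R (R' ρ) ρ) (hr : ContDiff ℝ 2 r)
    (hrad : ∀ t, deriv (deriv r) t = R' (r t) * R (r t) * ω t ^ 2)
    (hcons : ∀ t, R (r t) ^ 2 * ω t = ℓ) (hne : ∀ t, R (r t) ≠ 0) (t : ℝ) :
    radialEnergy R r ℓ t = radialEnergy R r ℓ 0 :=
  is_const_of_deriv_eq_zero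
    (fun s => (hasDerivAt_radialEnergy hR hr hrad hcons hne s).differentiableAt)
    (fun s => (hasDerivAt_radialEnergy hR hr hrad hcons hne s).deriv) t 0

end RadialEnergy

def hornProfile (b ρ : ℝ) : ℝ :=
  b * (1 + cos (ρ / b))

section HornProfile

variable {b : ℝ}

theorem hasDerivAt_hornProfile (hb : b ≠ 0) (ρ : ℝ) :
    HasDerivAt (hornProfile b) (-sin (ρ / b)) ρ := by
  have h := (((hasDerivAt_id ρ).div_const b).cos.const_add 1).const_mul b
  refine h.congr_deriv ?_
  simp only [id]
  field_simp

theorem hornProfile_nonneg (hb : 0 ≤ b) (ρ : ℝ) : 0 ≤ hornProfile b ρ :=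
  mul_nonneg hb (by linarith [neg_one_le_cos (ρ / b)])

theorem hornProfile_eq_zero_of_abs_eq (hb : 0 < b) {ρ : ℝ} (hρ : |ρ| = π * b) :
    hornProfile b ρ = 0 := by
  rw [hornProfile, ← cos_abs, abs_div, hρ, abs_of_pos hb, mul_div_cancel_right₀ π hb.ne', cos_pi]
  ring

end HornProfile

theorem Continuous.lt_of_forall_ne {f : ℝ → ℝ} (hf : Continuous f) {a c : ℝ} (ha : f a < c)
    (hne : ∀ t, f t ≠ c) (t : ℝ) : f t < c := by
  by_contra! h
  obtain ⟨s, -, hs⟩ := intermediate_value_uIcc hf.continuousOn (Set.mem_uIcc.2 (Or.inl ⟨ha.le, h⟩))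
  exact hne s hs

theorem abs_div_le_of_sq_div_sq_le {a x y : ℝ} (hx : 0 < x) (hy : 0 < y)
    (h : a ^ 2 / x ^ 2 ≤ y ^ 2) : |a| / y ≤ x := by
  rw [div_le_iff₀ (by positivity), ← mul_pow] at h
  rw [div_le_iff₀ hy, mul_comm]
  exact abs_le_of_sq_le_sq h (by positivity)

end

theorem horn_torus_nonradial_geodesics_bound_general
    (b : ℝ) (hb : 0 < b)
    (r θ : ℝ → ℝ) (hr : ContDiff ℝ 2 r)
    (hr0 : r 0 = 0)
    (hrad : ∀ t : ℝ,
      deriv (deriv r) t =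
        -Real.sin (r t / b) * (b * (1 + Real.cos (r t / b))) * (deriv θ t) ^ 2)
    (ℓ : ℝ) (hℓ0 : ℓ ≠ 0)
    (hcons : ∀ t : ℝ, (b * (1 + Real.cos (r t / b))) ^ 2 * deriv θ t = ℓ)
    (v : ℝ)
    (hv : v = Real.sqrt ((deriv r 0) ^ 2 +
      (b * (1 + Real.cos (r 0 / b))) ^ 2 * (deriv θ 0) ^ 2)) :
    ∀ t : ℝ,
      |ℓ| / v ≤ b * (1 + Real.cos (r t / b)) ∧
      0 < |ℓ| / v ∧
      -1 < Real.cos (r t / b) ∧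
      |r t| < Real.pi * b := by
  have hne : ∀ t, hornProfile b (r t) ≠ 0 := fun t h => hℓ0 <| by
    rw [← hcons t, show b * (1 + cos (r t / b)) = 0 from h]
    ring
  have hpos : ∀ t, 0 < hornProfile b (r t) :=
    fun t => (hornProfile_nonneg hb.le _).lt_of_ne' (hne t)
  have henergy := radialEnergy_eq (hasDerivAt_hornProfile hb.ne') hr hrad hcons hne
  have hv' : v = √(radialEnergy (hornProfile b) r ℓ 0) := by
    rw [hv, radialEnergy, ← hcons 0, hornProfile]
    have := hne 0
    unfold hornProfile at this
    field_simp
  have hE_pos : 0 < radialEnergy (hornProfile b) r ℓ 0 :=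
    add_pos_of_nonneg_of_pos (sq_nonneg _) (by have := hne 0; positivity)
  have hv_pos : 0 < v := hv' ▸ sqrt_pos.2 hE_pos
  have hv_sq : v ^ 2 = radialEnergy (hornProfile b) r ℓ 0 := hv' ▸ sq_sqrt hE_pos.le
  have hbound : ∀ t, |ℓ| / v ≤ hornProfile b (r t) := fun t =>
    abs_div_le_of_sq_div_sq_le (hpos t) hv_pos <|
      hv_sq ▸ henergy t ▸ le_add_of_nonneg_left (sq_nonneg _)
  have habs : ∀ t, |r t| < π * b :=
    hr.continuous.abs.lt_of_forall_ne (a := 0) (by simpa [hr0] using mul_pos pi_pos hb)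
      fun t h => hne t (hornProfile_eq_zero_of_abs_eq hb h)
  exact fun t => ⟨hbound t, div_pos (abs_pos.2 hℓ0) hv_pos,
    by linarith [pos_of_mul_pos_right (hpos t) hb.le], habs t⟩

/-- On the horn torus R(ρ) = b(1 + cos(ρ/b)), every nonradial geodesic (ℓ ≠ 0)
through the outer equator is bound: b(1 + cos(r/b)) ≥ |ℓ|/v > 0, hence
cos(r/b) > -1 and |r| < πb; it never reaches the degenerate inner equator point. -/
theorem horn_torus_nonradial_geodesics_bound
    (b : ℝ) (hb : 0 < b)
    (r θ : ℝ → ℝ) (hr : ContDiff ℝ 2 r) (hθ : ContDiff ℝ 2 θ)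
    (hr0 : r 0 = 0)
    (hrad : ∀ t : ℝ,
      deriv (deriv r) t =
        -Real.sin (r t / b) * (b * (1 + Real.cos (r t / b))) * (deriv θ t) ^ 2)
    (ℓ : ℝ) (hℓ0 : ℓ ≠ 0)
    (hcons : ∀ t : ℝ, (b * (1 + Real.cos (r t / b))) ^ 2 * deriv θ t = ℓ)
    (v : ℝ)
    (hv : v = Real.sqrt ((deriv r 0) ^ 2 +
      (b * (1 + Real.cos (r 0 / b))) ^ 2 * (deriv θ 0) ^ 2)) :
    ∀ t : ℝ,
      |ℓ| / v ≤ b * (1 + Real.cos (r t / b)) ∧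
      0 < |ℓ| / v ∧
      -1 < Real.cos (r t / b) ∧
      |r t| < Real.pi * b :=
  horn_torus_nonradial_geodesics_bound_general b hb r θ hr hr0 hrad ℓ hℓ0 hcons v hv
end
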